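/- Define u : ℂ → ℂ by u(t) = C/t² for a fixed constant C ∈ ℂ. Then for all nonzero complex x, y, z with x + y + z = 0, the 3×3 determinant with rows (u(x), u′(x), 1), (u(y), u′(y), 1), (u(z), u′(z), 1) vanishes, where u′(t) = −2C/t³. -/

import Mathlib

/-!
In the variables `a = 1/x`, the rows are `(C a², -2C a³, 1)`, so the determinant is `-2C²` times
the generalized Vandermonde determinant with exponents `0, 2, 3`. That determinant factors as the
Vandermonde product times the elementary symmetric function `ab + bc + ca`, and
`1/(xy) + 1/(yz) + 1/(zx) = (x + y + z)/(xyz)` vanishes on the plane `x + y + z = 0`.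
-/

theorem Matrix.det_mul_sq_mul_cube_one {R : Type*} [CommRing R] (p q a b c : R) :
    Matrix.det !![p * a ^ 2, q * a ^ 3, 1; p * b ^ 2, q * b ^ 3, 1; p * c ^ 2, q * c ^ 3, 1] =
      p * q * ((a - b) * (b - c) * (c - a) * (a * b + b * c + c * a)) := by
  rw [Matrix.det_fin_three]
  simp only [Matrix.of_apply, Matrix.cons_val', Matrix.cons_val_zero, Matrix.cons_val_one,
    Matrix.cons_val_two, Matrix.empty_val', Matrix.cons_val_fin_one, Matrix.head_cons,
    Matrix.tail_cons, Matrix.head_fin_const]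
  ring

theorem inv_mul_inv_add_inv_mul_inv_add_inv_mul_inv_eq_zero {K : Type*} [Field K] {x y z : K}
    (hx : x ≠ 0) (hy : y ≠ 0) (hz : z ≠ 0) (hsum : x + y + z = 0) :
    x⁻¹ * y⁻¹ + y⁻¹ * z⁻¹ + z⁻¹ * x⁻¹ = 0 := by
  field_simp
  linear_combination hsum

theorem stmt_19 (C : ℂ) (u u' : ℂ → ℂ)
    (hu : ∀ t, u t = C / t ^ 2) (hu' : ∀ t, u' t = -2 * C / t ^ 3)
    (x y z : ℂ) (hx : x ≠ 0) (hy : y ≠ 0) (hz : z ≠ 0) (hsum : x + y + z = 0) :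
    Matrix.det !![u x, u' x, 1; u y, u' y, 1; u z, u' z, 1] = 0 := by
  have hu_inv : ∀ t, u t = C * t⁻¹ ^ 2 := fun t => by rw [hu, div_eq_mul_inv, inv_pow]
  have hu'_inv : ∀ t, u' t = -2 * C * t⁻¹ ^ 3 := fun t => by rw [hu', div_eq_mul_inv, inv_pow]
  simp only [hu_inv, hu'_inv]
  rw [Matrix.det_mul_sq_mul_cube_one,
    inv_mul_inv_add_inv_mul_inv_add_inv_mul_inv_eq_zero hx hy hz hsum, mul_zero, mul_zero]
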